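/- arXiv:1911.09158 — 6 statements merged into one kernel-verified Lean document; each statement's English description precedes it below -/
import Mathlib

section
/- Let n be a positive integer, K an n×n real symmetric positive semidefinite matrix, λ > 0, y ∈ ℝⁿ, z ∈ ℝⁿ, and p ≥ 0 a real number. Then p · zᵀ (K + nλI)⁻¹ z ≤ (p/(n²λ)) · zᵀ (y yᵀ + n I) z. In particular, the ridge leverage function l_λ(w) = p(w) z_wᵀ (K + nλI)⁻¹ z_w is pointwise dominated by the surrogate leverage function L_λ(w) = (p(w)/(n²λ)) z_wᵀ (y yᵀ + n I) z_w. -/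
/-!
Since `K ⪰ 0`, the ridge matrix satisfies `(K + cI)⁻¹ ⪯ c⁻¹ I` for `c = nλ`, while
`y yᵀ + nI ⪰ nI`; both sides of the inequality are thus compared with `p ‖z‖² / (nλ)`.
-/

open Matrix

variable {ι : Type*} [Fintype ι] [DecidableEq ι]

/-- With `v = K w`, the difference of the two sides is `‖v‖² + c ⟪w, v⟫ ≥ 0`. -/
lemma Matrix.PosSemidef.smul_dotProduct_add_smul_one_mulVec_le {K : Matrix ι ι ℝ}
    (hK : K.PosSemidef) {c : ℝ} (hc : 0 ≤ c) (w : ι → ℝ) :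
    c * (w ⬝ᵥ ((K + c • 1) *ᵥ w)) ≤ ((K + c • 1) *ᵥ w) ⬝ᵥ ((K + c • 1) *ᵥ w) := by
  have hKw : 0 ≤ w ⬝ᵥ (K *ᵥ w) := by simpa using hK.dotProduct_mulVec_nonneg w
  have hKwKw : 0 ≤ (K *ᵥ w) ⬝ᵥ (K *ᵥ w) := by
    simpa using dotProduct_self_star_nonneg (K *ᵥ w)
  simp only [add_mulVec, smul_mulVec, one_mulVec, dotProduct_add, add_dotProduct,
    dotProduct_smul, smul_dotProduct, smul_eq_mul, dotProduct_comm (K *ᵥ w) w]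
  nlinarith [mul_nonneg hc hKw]

lemma Matrix.PosSemidef.smul_dotProduct_inv_add_smul_one_mulVec_le {K : Matrix ι ι ℝ}
    (hK : K.PosSemidef) {c : ℝ} (hc : 0 < c) (z : ι → ℝ) :
    c * (z ⬝ᵥ ((K + c • 1)⁻¹ *ᵥ z)) ≤ z ⬝ᵥ z := by
  have hA : (K + c • 1).PosDef := PosDef.posSemidef_add hK <| by
    simpa [smul_one_eq_diagonal] using posDef_diagonal_iff.mpr fun _ => hc
  have hz : (K + c • 1) *ᵥ ((K + c • 1)⁻¹ *ᵥ z) = z := by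
    rw [mulVec_mulVec, mul_nonsing_inv _ hA.det_pos.ne'.isUnit, one_mulVec]
  have := hK.smul_dotProduct_add_smul_one_mulVec_le hc.le ((K + c • 1)⁻¹ *ᵥ z)
  rwa [hz, dotProduct_comm _ z] at this

lemma dotProduct_vecMulVec_add_smul_one_mulVec (y z : ι → ℝ) (a : ℝ) :
    z ⬝ᵥ ((vecMulVec y y + a • 1) *ᵥ z) = (y ⬝ᵥ z) ^ 2 + a * (z ⬝ᵥ z) := by
  simp only [add_mulVec, vecMulVec_mulVec, smul_mulVec, one_mulVec, dotProduct_add,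
    dotProduct_smul, op_smul_eq_smul, smul_eq_mul, dotProduct_comm z y, sq]

/-- the ridge leverage function is pointwise dominated by the surrogate
leverage function: `p · zᵀ (K + nλI)⁻¹ z ≤ (p/(n²λ)) · zᵀ (y yᵀ + n I) z`. -/
theorem surrogate_dominates_leverage {n : ℕ} (hn : 0 < n)
    (K : Matrix (Fin n) (Fin n) ℝ) (hK : K.PosSemidef)
    (lam : ℝ) (hlam : 0 < lam) (y z : Fin n → ℝ) (p : ℝ) (hp : 0 ≤ p) :
    p * (z ⬝ᵥ ((K + (↑n * lam) • (1 : Matrix (Fin n) (Fin n) ℝ))⁻¹ *ᵥ z))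
      ≤ (p / ((n : ℝ) ^ 2 * lam)) *
        (z ⬝ᵥ ((vecMulVec y y + (n : ℝ) • (1 : Matrix (Fin n) (Fin n) ℝ)) *ᵥ z)) := by
  have hc : 0 < (n : ℝ) * lam := by positivity
  have hridge := hK.smul_dotProduct_inv_add_smul_one_mulVec_le hc z
  rw [dotProduct_vecMulVec_add_smul_one_mulVec]
  calc p * (z ⬝ᵥ ((K + (n * lam) • 1)⁻¹ *ᵥ z))
      ≤ p * ((z ⬝ᵥ z) / (n * lam)) := by gcongr; rwa [le_div_iff₀' hc]
    _ = p / ((n : ℝ) ^ 2 * lam) * (n * (z ⬝ᵥ z)) := by field_simp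
    _ ≤ p / ((n : ℝ) ^ 2 * lam) * ((y ⬝ᵥ z) ^ 2 + n * (z ⬝ᵥ z)) := by
      gcongr; exact le_add_of_nonneg_left (sq_nonneg _)
end

section
/- Let n be a positive integer, K a nonzero n×n real symmetric positive semidefinite matrix, λ > 0, y ∈ ℝⁿ, z ∈ ℝⁿ a vector, and p ≥ 0. Define l = p · zᵀ (K + nλI)⁻¹ z, L = (p/(n²λ)) zᵀ (y yᵀ + n I) z, D = (1/(n²λ)) Tr[(y yᵀ + n I) K] (noting D > 0), and the surrogate leverage score q = L / D. Then l ≤ D · q; that is, the ratio of the true ridge leverage function to the surrogate leverage score distribution is bounded by D everywhere. -/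
/-!
Since `K` is positive semidefinite, `K + nλ I ≥ nλ I`, so `zᵀ (K + nλ I)⁻¹ z ≤ |z|² / (nλ)`.
On the other side `D q = L` and `zᵀ (y yᵀ + n I) z = (y ⬝ z)² + n |z|² ≥ n |z|²`, so `L ≥ p |z|² / (nλ)`.
-/

open Matrix

namespace Matrix

variable {ι R : Type*} [Fintype ι] [CommSemiring R]

theorem trace_vecMulVec_mul (x y : ι → R) (A : Matrix ι ι R) :
    trace (vecMulVec x y * A) = y ⬝ᵥ (A *ᵥ x) := by
  rw [trace_mul_comm, mul_vecMulVec, trace_vecMulVec, dotProduct_comm]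

theorem dotProduct_vecMulVec_mulVec (u x y v : ι → R) :
    u ⬝ᵥ (vecMulVec x y *ᵥ v) = (u ⬝ᵥ x) * (y ⬝ᵥ v) := by
  rw [vecMulVec_mulVec, op_smul_eq_smul, dotProduct_smul, smul_eq_mul, mul_comm]

theorem PosSemidef.dotProduct_inv_add_smul_one_mulVec_le [DecidableEq ι] {K : Matrix ι ι ℝ}
    (hK : K.PosSemidef) {c : ℝ} (hc : 0 < c) (z : ι → ℝ) :
    z ⬝ᵥ ((K + c • 1)⁻¹ *ᵥ z) ≤ (z ⬝ᵥ z) / c := by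
  have hM : (K + c • 1).PosDef :=
    PosDef.posSemidef_add hK
      (by rw [smul_one_eq_diagonal]; exact posDef_diagonal_iff.mpr fun _ ↦ hc)
  set w := (K + c • 1)⁻¹ *ᵥ z
  have hz : z = K *ᵥ w + c • w := by
    have : (K + c • 1) *ᵥ w = z := by
      rw [mulVec_mulVec, mul_nonsing_inv _ (isUnit_iff_ne_zero.mpr hM.det_pos.ne'), one_mulVec]
    rwa [add_mulVec, smul_mulVec, one_mulVec, eq_comm] at this
  have hKw : 0 ≤ K *ᵥ w ⬝ᵥ w := by simpa [dotProduct_comm] using hK.dotProduct_mulVec_nonneg w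
  have hKwKw : 0 ≤ K *ᵥ w ⬝ᵥ K *ᵥ w := dotProduct_self_star_nonneg _
  -- with `z = Kw + cw`: `c (z ⬝ w) = c (Kw ⬝ w) + c² |w|² ≤ |Kw|² + 2c (Kw ⬝ w) + c² |w|² = |z|²`
  rw [le_div_iff₀ hc, hz]
  simp only [add_dotProduct, dotProduct_add, smul_dotProduct, dotProduct_smul, smul_eq_mul,
    dotProduct_comm w (K *ᵥ w)]
  nlinarith

end Matrix

/-- with `l = p zᵀ(K+nλI)⁻¹z`, `L = (p/(n²λ)) zᵀ(y yᵀ + nI)z`,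
`D = (1/(n²λ)) Tr[(y yᵀ + nI)K] > 0` and `q = L/D`, one has `l ≤ D · q`. -/
theorem leverage_le_mass_mul_score {n : ℕ} (hn : 0 < n)
    (K : Matrix (Fin n) (Fin n) ℝ) (hK : K.PosSemidef) (hKne : K ≠ 0)
    (lam : ℝ) (hlam : 0 < lam) (y z : Fin n → ℝ) (p : ℝ) (hp : 0 ≤ p)
    (l L D q : ℝ)
    (hl : l = p * (z ⬝ᵥ ((K + (↑n * lam) • (1 : Matrix (Fin n) (Fin n) ℝ))⁻¹ *ᵥ z)))
    (hL : L = (p / ((n : ℝ) ^ 2 * lam)) *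
        (z ⬝ᵥ ((vecMulVec y y + (n : ℝ) • (1 : Matrix (Fin n) (Fin n) ℝ)) *ᵥ z)))
    (hD : D = (1 / ((n : ℝ) ^ 2 * lam)) *
        Matrix.trace ((vecMulVec y y + (n : ℝ) • (1 : Matrix (Fin n) (Fin n) ℝ)) * K))
    (hq : q = L / D) :
    0 < D ∧ l ≤ D * q := by
  have hn' : (0 : ℝ) < n := Nat.cast_pos.mpr hn
  have htrace : 0 < trace K := hK.trace_nonneg.lt_of_ne' (hK.trace_eq_zero_iff.not.mpr hKne)
  have hDpos : 0 < D := by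
    rw [hD, add_mul, trace_add, trace_vecMulVec_mul, smul_mul, one_mul, trace_smul, smul_eq_mul]
    have := hK.dotProduct_mulVec_nonneg y
    simp only [star_trivial] at this
    positivity
  refine ⟨hDpos, ?_⟩
  rw [hq, mul_div_cancel₀ _ hDpos.ne', hl, hL, add_mulVec, dotProduct_add,
    dotProduct_vecMulVec_mulVec, dotProduct_comm z y, smul_mulVec, one_mulVec, dotProduct_smul,
    smul_eq_mul]
  calc p * (z ⬝ᵥ ((K + (n * lam) • 1)⁻¹ *ᵥ z))
      ≤ p * ((z ⬝ᵥ z) / (n * lam)) :=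
        mul_le_mul_of_nonneg_left (hK.dotProduct_inv_add_smul_one_mulVec_le (by positivity) z) hp
    _ = p / (n ^ 2 * lam) * (n * (z ⬝ᵥ z)) := by field_simp
    _ ≤ p / (n ^ 2 * lam) * ((y ⬝ᵥ z) * (y ⬝ᵥ z) + n * (z ⬝ᵥ z)) := by
        gcongr
        exact le_add_of_nonneg_left (mul_self_nonneg _)
end

section
/- Let n be a positive integer, c > 0, and 0 < λ < 1. Let K be an n×n real symmetric positive semidefinite matrix whose eigenvalues satisfy λᵢ ≤ n e^{-c i} for all i = 1, …, n (eigenvalues in nonincreasing order, exponential decay). Then Tr[K (K + nλI)⁻¹] ≤ (1/c) log(1/λ) + 1 + 1/(e^c − 1). -/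
open Matrix

lemma trace_dof {n : ℕ} (A : Matrix (Fin n) (Fin n) ℝ) (hA : A.IsHermitian) (a : ℝ) (ha : 0 < a)
    (hpos : ∀ i, 0 ≤ hA.eigenvalues i) :
    Matrix.trace (A * (A + a • (1 : Matrix (Fin n) (Fin n) ℝ))⁻¹)
      = ∑ i, hA.eigenvalues i / (hA.eigenvalues i + a) := by
  set U : Matrix (Fin n) (Fin n) ℝ := (hA.eigenvectorUnitary : Matrix (Fin n) (Fin n) ℝ) with hU
  have hUU : U * star U = 1 := (Matrix.mem_unitaryGroup_iff).mp hA.eigenvectorUnitary.2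
  have hUU' : star U * U = 1 := (Matrix.mem_unitaryGroup_iff').mp hA.eigenvectorUnitary.2
  have conj : ∀ M N : Matrix (Fin n) (Fin n) ℝ,
      (U * M * star U) * (U * N * star U) = U * (M * N) * star U := by
    intro M N
    calc (U * M * star U) * (U * N * star U)
        = U * M * (star U * U) * N * star U := by simp only [Matrix.mul_assoc]
      _ = U * (M * N) * star U := by rw [hUU']; simp only [Matrix.mul_one, Matrix.mul_assoc]
  have hspec : A = U * Matrix.diagonal hA.eigenvalues * star U := by
    have := hA.spectral_theorem
    simpa using this
  have key : A + a • (1 : Matrix (Fin n) (Fin n) ℝ)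
      = U * Matrix.diagonal (fun i => hA.eigenvalues i + a) * star U := by
    have h1 : (Matrix.diagonal (fun i => hA.eigenvalues i + a) : Matrix (Fin n) (Fin n) ℝ)
        = Matrix.diagonal hA.eigenvalues + a • 1 := by
      ext i j
      by_cases h : i = j <;> simp [Matrix.diagonal, h, Matrix.one_apply]
    rw [h1, mul_add, add_mul, ← hspec]
    congr 1
    rw [Matrix.mul_smul, Matrix.smul_mul, mul_one, hUU]
  have hne : ∀ i, hA.eigenvalues i + a ≠ 0 := fun i =>
    (add_pos_of_nonneg_of_pos (hpos i) ha).ne'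
  have hinv : (A + a • (1 : Matrix (Fin n) (Fin n) ℝ))⁻¹
      = U * Matrix.diagonal (fun i => (hA.eigenvalues i + a)⁻¹) * star U := by
    rw [key]
    apply Matrix.inv_eq_right_inv
    rw [conj, Matrix.diagonal_mul_diagonal]
    simp only [mul_inv_cancel₀ (hne _)]
    rw [Matrix.diagonal_one, Matrix.mul_one, hUU]
  have hprod : A * (A + a • (1 : Matrix (Fin n) (Fin n) ℝ))⁻¹
      = U * Matrix.diagonal (fun i => hA.eigenvalues i * (hA.eigenvalues i + a)⁻¹) * star U := by
    have h := conj (Matrix.diagonal hA.eigenvalues)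
      (Matrix.diagonal fun i => (hA.eigenvalues i + a)⁻¹)
    rw [← hspec, Matrix.diagonal_mul_diagonal] at h
    rw [hinv, h]
  rw [hprod, Matrix.trace_mul_cycle, hUU', Matrix.one_mul,
    Matrix.trace_diagonal]
  simp [div_eq_mul_inv]


lemma sum_min_bound (n : ℕ) (c lam : ℝ) (hc : 0 < c) (hlam0 : 0 < lam) (hlam1 : lam < 1) :
    ∑ i ∈ Finset.range n, min 1 (Real.exp (-(c * (i + 1))) / lam)
      ≤ (1 / c) * Real.log (1 / lam) + 1 + 1 / (Real.exp c - 1) := by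
  set t : ℝ := (1 / c) * Real.log (1 / lam) with ht
  have hlog : 0 < Real.log (1 / lam) := Real.log_pos (by rw [lt_div_iff₀ hlam0]; linarith)
  have ht0 : 0 < t := by positivity
  set N : ℕ := ⌊t⌋₊ with hN
  have hNt : (N : ℝ) ≤ t := Nat.floor_le ht0.le
  have htN1 : t < N + 1 := Nat.lt_floor_add_one t
  set r : ℝ := Real.exp (-c) with hr
  have hr0 : 0 < r := Real.exp_pos _
  have hr1 : r < 1 := Real.exp_lt_one_iff.mpr (by linarith)
  have hlaminv : 1 / lam = Real.exp (c * t) := by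
    rw [ht]
    rw [show c * ((1/c) * Real.log (1/lam)) = Real.log (1/lam) by field_simp]
    rw [Real.exp_log (by positivity)]
  have hterm : ∀ i : ℕ, min 1 (Real.exp (-(c * (i + 1))) / lam)
      ≤ if i < N then (1 : ℝ) else r ^ (i - N) := by
    intro i
    by_cases h : i < N
    · simp [h]
    · simp only [h, if_false]
      refine le_trans (min_le_right _ _) ?_
      have hi : N ≤ i := le_of_not_gt h
      rw [div_eq_mul_inv, show lam⁻¹ = 1 / lam by rw [one_div], hlaminv, ← Real.exp_add]
      rw [hr, ← Real.exp_nat_mul]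
      apply Real.exp_le_exp.mpr
      have : ((i - N : ℕ) : ℝ) = (i : ℝ) - N := by
        push_cast [Nat.cast_sub hi]; ring
      rw [this]
      nlinarith [htN1, hc]
  calc ∑ i ∈ Finset.range n, min 1 (Real.exp (-(c * (i + 1))) / lam)
      ≤ ∑ i ∈ Finset.range n, (if i < N then (1 : ℝ) else r ^ (i - N)) :=
        Finset.sum_le_sum fun i _ => hterm i
    _ = ∑ i ∈ (Finset.range n).filter (· < N), (1 : ℝ)
        + ∑ i ∈ (Finset.range n).filter (¬ · < N), r ^ (i - N) := by
        rw [← Finset.sum_filter_add_sum_filter_not (Finset.range n) (· < N)]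
        congr 1
        · exact Finset.sum_congr rfl fun i hi => by simp [Finset.mem_filter.mp hi |>.2]
        · exact Finset.sum_congr rfl fun i hi => by
            simp [Finset.mem_filter.mp hi |>.2]
    _ ≤ (N : ℝ) + 1 / (1 - r) := by
        gcongr
        · rw [Finset.sum_const, nsmul_eq_mul, mul_one]
          have hcard : ((Finset.range n).filter (· < N)).card ≤ N := le_trans
            (Finset.card_le_card (fun i hi => Finset.mem_range.mpr (Finset.mem_filter.mp hi).2))
            (by simp)
          exact_mod_cast hcard
        · calc ∑ i ∈ (Finset.range n).filter (¬ · < N), r ^ (i - N)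
              = ∑ j ∈ ((Finset.range n).filter (¬ · < N)).image (· - N), r ^ j := by
                rw [Finset.sum_image]
                intro a ha b hb hab
                have := (Finset.mem_filter.mp ha).2
                have := (Finset.mem_filter.mp hb).2
                simp only at *
                omega
            _ ≤ ∑ j ∈ Finset.range n, r ^ j := by
                apply Finset.sum_le_sum_of_subset_of_nonneg
                · intro j hj
                  obtain ⟨i, hi, rfl⟩ := Finset.mem_image.mp hj
                  have := Finset.mem_range.mp (Finset.mem_filter.mp hi).1
                  exact Finset.mem_range.mpr (by omega)
                · intro j _ _; positivity
            _ ≤ 1 / (1 - r) := by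
                have h1r : (0:ℝ) < 1 - r := by linarith
                rw [geom_sum_eq hr1.ne,
                  show (r ^ n - 1) / (r - 1) = (1 - r ^ n) / (1 - r) by
                    rw [← neg_div_neg_eq]; ring_nf]
                exact (div_le_div_iff_of_pos_right h1r).mpr (by nlinarith [pow_nonneg hr0.le n])
    _ ≤ t + 1 + 1 / (Real.exp c - 1) := by
        have hrexp : 1 - r = (Real.exp c - 1) / Real.exp c := by
          rw [hr, Real.exp_neg]; field_simp
        have h1 : (1:ℝ) < Real.exp c := by
          calc (1:ℝ) = Real.exp 0 := Real.exp_zero.symm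
            _ < Real.exp c := Real.exp_lt_exp.mpr hc
        have hthis : 1 / (1 - r) = 1 + 1 / (Real.exp c - 1) := by
          rw [hrexp, one_div_div]
          rw [div_eq_iff (by linarith : Real.exp c - 1 ≠ 0), add_mul, one_mul,
            div_mul_cancel₀ _ (by linarith : Real.exp c - 1 ≠ 0)]
          ring
        rw [hthis]; linarith


/-- exponential eigenvalue decay: if the eigenvalues of `K`, listed in
nonincreasing order, satisfy `λᵢ ≤ n e^{-c i}` for `i = 1, …, n`, then
`Tr[K (K + nλI)⁻¹] ≤ (1/c) log(1/λ) + 1 + 1/(e^c − 1)`. -/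
theorem dof_bound_exponential_decay {n : ℕ} (hn : 0 < n) (c : ℝ) (hc : 0 < c)
    (lam : ℝ) (hlam0 : 0 < lam) (hlam1 : lam < 1)
    (K : Matrix (Fin n) (Fin n) ℝ) (hK : K.PosSemidef)
    (σ : Equiv.Perm (Fin n)) (hanti : Antitone (hK.1.eigenvalues ∘ σ))
    (hdecay : ∀ i : Fin n, hK.1.eigenvalues (σ i) ≤ (n : ℝ) * Real.exp (-(c * (i.1 + 1)))) :
    Matrix.trace (K * (K + (↑n * lam) • (1 : Matrix (Fin n) (Fin n) ℝ))⁻¹)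
      ≤ (1 / c) * Real.log (1 / lam) + 1 + 1 / (Real.exp c - 1) := by
  have hn' : (0:ℝ) < n := by exact_mod_cast hn
  have ha : (0:ℝ) < ↑n * lam := by positivity
  set e : Fin n → ℝ := hK.1.eigenvalues with he
  have hpos : ∀ i, 0 ≤ e i := hK.eigenvalues_nonneg
  rw [trace_dof K hK.1 (↑n * lam) ha hpos]
  have hre : ∑ i, e i / (e i + ↑n * lam) = ∑ i, e (σ i) / (e (σ i) + ↑n * lam) :=
    (Equiv.sum_comp σ (fun j => e j / (e j + ↑n * lam))).symm
  rw [hre]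
  calc ∑ i, e (σ i) / (e (σ i) + ↑n * lam)
      ≤ ∑ i : Fin n, min 1 (Real.exp (-(c * (i.1 + 1))) / lam) := by
        apply Finset.sum_le_sum
        intro i _
        have hd : 0 < e (σ i) + ↑n * lam := by
          have := hpos (σ i); linarith
        refine le_min ?_ ?_
        · rw [div_le_one hd]
          have := hpos (σ i); linarith
        · rw [div_le_div_iff₀ hd hlam0]
          have h1 := hdecay i
          have h2 : (0:ℝ) ≤ Real.exp (-(c * (i.1 + 1))) := (Real.exp_pos _).le
          nlinarith [hpos (σ i)]
    _ = ∑ i ∈ Finset.range n, min 1 (Real.exp (-(c * (i + 1))) / lam) := by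
        rw [← Fin.sum_univ_eq_sum_range (fun i : ℕ => min 1 (Real.exp (-(c * (i + 1))) / lam)) n]
    _ ≤ (1 / c) * Real.log (1 / lam) + 1 + 1 / (Real.exp c - 1) :=
        sum_min_bound n c lam hc hlam0 hlam1
end

section
/- Let n be a positive integer, t ≥ 1 a real number, and 0 < λ ≤ 1. Let K be an n×n real symmetric positive semidefinite matrix whose eigenvalues satisfy λᵢ ≤ n i^{-2t} for all i = 1, …, n (polynomial decay). Then Tr[K (K + nλI)⁻¹] ≤ (1 + 1/(2t − 1)) λ^{-1/(2t)} + 1. -/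
/-!
Diagonalising `K`, the trace is `∑ᵢ λᵢ / (λᵢ + nλ)`, and the decay hypothesis bounds the `i`-th
term by `min 1 ((i + 1)^{-2t} / λ)`. With `m = λ^{-1/(2t)}`, the first `⌈m⌉ ≤ m + 1` terms are
at most `1`, and the remaining ones are dominated by `λ⁻¹ ∫_{⌈m⌉}^∞ x^{-2t} dx ≤ m / (2t - 1)`,
because `m^{1-2t} = λ m`.
-/

open Matrix Finset

namespace Matrix.IsHermitian

variable {n : Type*} [Fintype n] [DecidableEq n] {A : Matrix n n ℝ}

theorem trace_cfc (hA : A.IsHermitian) (f : ℝ → ℝ) :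
    trace (cfc f A) = ∑ i, f (hA.eigenvalues i) := by
  rw [hA.cfc_eq, IsHermitian.cfc, Unitary.conjStarAlgAut_apply, trace_mul_cycle,
    Unitary.coe_star_mul_self, one_mul, trace_diagonal]
  rfl

theorem mul_inv_add_smul_one_eq_cfc (hA : A.IsHermitian) {c : ℝ}
    (hc : ∀ i, hA.eigenvalues i + c ≠ 0) :
    A * (A + c • 1)⁻¹ = cfc (fun x ↦ x / (x + c)) A := by
  have hspec : ∀ x ∈ spectrum ℝ A, x + c ≠ 0 := by
    rw [hA.spectrum_real_eq_range_eigenvalues]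
    rintro _ ⟨i, rfl⟩
    exact hc i
  have hcont : ContinuousOn (fun x : ℝ ↦ (x + c)⁻¹) (spectrum ℝ A) :=
    (continuousOn_id.add continuousOn_const).inv₀ hspec
  simp_rw [div_eq_mul_inv]
  rw [cfc_mul (fun x ↦ x) (fun x ↦ (x + c)⁻¹) A continuousOn_id hcont, cfc_id' ℝ A,
    cfc_inv (· + c) A hspec, cfc_add_const c (fun x ↦ x) A, cfc_id' ℝ A,
    Algebra.algebraMap_eq_smul_one, nonsing_inv_eq_ringInverse]

theorem trace_mul_inv_add_smul_one (hA : A.IsHermitian) {c : ℝ}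
    (hc : ∀ i, hA.eigenvalues i + c ≠ 0) :
    trace (A * (A + c • 1)⁻¹) = ∑ i, hA.eigenvalues i / (hA.eigenvalues i + c) := by
  rw [hA.mul_inv_add_smul_one_eq_cfc hc, hA.trace_cfc]

end Matrix.IsHermitian

theorem div_add_le_min_one_div {x c : ℝ} (hx : 0 ≤ x) (hc : 0 < c) :
    x / (x + c) ≤ min 1 (x / c) :=
  le_min (div_le_one_of_le₀ (le_add_of_nonneg_right hc.le) (by positivity))
    (div_le_div_of_nonneg_left hx hc (le_add_of_nonneg_left hx))

theorem sum_Ico_rpow_neg_le_of_one_lt {s : ℝ} (hs : 1 < s) {N : ℕ} (hN : 0 < N) (M : ℕ) :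
    ∑ i ∈ Ico N M, ((i : ℝ) + 1) ^ (-s) ≤ (N : ℝ) ^ (1 - s) / (s - 1) := by
  have hN' : (0 : ℝ) < N := by exact_mod_cast hN
  have hbound_nonneg : 0 ≤ (N : ℝ) ^ (1 - s) / (s - 1) := by
    have := sub_pos.2 hs
    positivity
  rcases le_or_gt M N with hMN | hNM
  · simpa [Ico_eq_empty_of_le hMN] using hbound_nonneg
  have hM' : (0 : ℝ) < M := by exact_mod_cast hN.trans hNM
  have hanti : AntitoneOn (fun x : ℝ ↦ x ^ (-s)) (Set.Icc (N : ℝ) M) := fun x hx y _ hxy ↦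
    Real.rpow_le_rpow_of_nonpos (hN'.trans_le hx.1) hxy (by linarith)
  calc ∑ i ∈ Ico N M, ((i : ℝ) + 1) ^ (-s)
      ≤ ∫ x in (N : ℝ)..M, x ^ (-s) := by
        simpa using hanti.sum_le_integral_Ico hNM.le
    _ = ((N : ℝ) ^ (1 - s) - (M : ℝ) ^ (1 - s)) / (s - 1) := by
        rw [integral_rpow (Or.inr ⟨by linarith, Set.notMem_uIcc_of_lt hN' hM'⟩),
          div_eq_div_iff (by linarith) (by linarith)]
        ring_nf
    _ ≤ (N : ℝ) ^ (1 - s) / (s - 1) := by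
        gcongr
        exact sub_le_self _ (Real.rpow_nonneg hM'.le _)

theorem sum_range_min_one_rpow_neg_div_le {s lam : ℝ} (hs : 1 < s) (hlam : 0 < lam) (n : ℕ) :
    ∑ i ∈ range n, min 1 (((i : ℝ) + 1) ^ (-s) / lam)
      ≤ (1 + 1 / (s - 1)) * lam ^ (-(1 / s)) + 1 := by
  set m := lam ^ (-(1 / s))
  have hm : 0 < m := Real.rpow_pos_of_pos hlam _
  set N := ⌈m⌉₊
  have hN : 0 < N := Nat.ceil_pos.2 hm
  have hNm : (N : ℝ) < m + 1 := Nat.ceil_lt_add_one hm.le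
  have hm_rpow : m ^ (1 - s) = lam * m := by
    have hexp : -(1 / s) * (1 - s) = 1 + -(1 / s) := by field_simp; ring
    rw [← Real.rpow_mul hlam.le, hexp, Real.rpow_add hlam, Real.rpow_one]
  have htail : ∑ i ∈ Ico N (max n N), ((i : ℝ) + 1) ^ (-s) / lam ≤ m / (s - 1) := by
    rw [← sum_div, div_le_iff₀ hlam, div_mul_eq_mul_div, mul_comm m, ← hm_rpow]
    refine (sum_Ico_rpow_neg_le_of_one_lt hs hN _).trans ?_
    gcongr ?_ / _
    exact Real.rpow_le_rpow_of_nonpos hm (Nat.le_ceil m) (by linarith)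
  calc ∑ i ∈ range n, min 1 (((i : ℝ) + 1) ^ (-s) / lam)
      ≤ ∑ i ∈ range (max n N), min 1 (((i : ℝ) + 1) ^ (-s) / lam) :=
        sum_le_sum_of_subset_of_nonneg (range_subset_range.2 (le_max_left n N))
          fun _ _ _ ↦ by positivity
    _ = ∑ i ∈ range N, min 1 (((i : ℝ) + 1) ^ (-s) / lam)
          + ∑ i ∈ Ico N (max n N), min 1 (((i : ℝ) + 1) ^ (-s) / lam) :=
        (sum_range_add_sum_Ico _ (le_max_right n N)).symm
    _ ≤ ∑ _i ∈ range N, 1 + ∑ i ∈ Ico N (max n N), ((i : ℝ) + 1) ^ (-s) / lam := by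
        gcongr <;> simp
    _ ≤ (m + 1) + m / (s - 1) := by
        rw [sum_const, card_range, nsmul_one]
        exact add_le_add hNm.le htail
    _ = (1 + 1 / (s - 1)) * m + 1 := by ring

theorem dof_bound_polynomial_decay_general {n : ℕ} (t : ℝ) (ht : 1 ≤ t)
    (lam : ℝ) (hlam0 : 0 < lam)
    (K : Matrix (Fin n) (Fin n) ℝ) (hK : K.PosSemidef)
    (σ : Equiv.Perm (Fin n))
    (hdecay : ∀ i : Fin n, hK.1.eigenvalues (σ i) ≤ (n : ℝ) * ((i.1 + 1 : ℝ)) ^ (-(2 * t))) :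
    Matrix.trace (K * (K + (↑n * lam) • (1 : Matrix (Fin n) (Fin n) ℝ))⁻¹)
      ≤ (1 + 1 / (2 * t - 1)) * lam ^ (-(1 / (2 * t))) + 1 := by
  set μ := hK.1.eigenvalues
  have hc (i : Fin n) : 0 < (n : ℝ) * lam := mul_pos (by exact_mod_cast i.pos) hlam0
  have hterm (i : Fin n) :
      μ (σ i) / (μ (σ i) + n * lam) ≤ min 1 (((i : ℕ) + 1 : ℝ) ^ (-(2 * t)) / lam) := by
    refine (div_add_le_min_one_div (hK.eigenvalues_nonneg _) (hc i)).trans (min_le_min_left _ ?_)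
    calc μ (σ i) / (n * lam) ≤ n * ((i : ℕ) + 1 : ℝ) ^ (-(2 * t)) / (n * lam) := by
          gcongr
          exact hdecay i
      _ = ((i : ℕ) + 1 : ℝ) ^ (-(2 * t)) / lam :=
          mul_div_mul_left _ _ (left_ne_zero_of_mul (hc i).ne')
  calc trace (K * (K + (n * lam) • 1)⁻¹) = ∑ i, μ i / (μ i + n * lam) :=
        hK.1.trace_mul_inv_add_smul_one fun i ↦
          (add_pos_of_nonneg_of_pos (hK.eigenvalues_nonneg i) (hc i)).ne'
    _ = ∑ i, μ (σ i) / (μ (σ i) + n * lam) := (Equiv.sum_comp σ _).symm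
    _ ≤ ∑ i : Fin n, min 1 (((i : ℕ) + 1 : ℝ) ^ (-(2 * t)) / lam) := sum_le_sum fun i _ ↦ hterm i
    _ = ∑ i ∈ range n, min 1 (((i : ℝ) + 1) ^ (-(2 * t)) / lam) :=
        Fin.sum_univ_eq_sum_range (fun i ↦ min 1 (((i : ℝ) + 1) ^ (-(2 * t)) / lam)) n
    _ ≤ _ := sum_range_min_one_rpow_neg_div_le (by linarith) hlam0 n

/-- polynomial eigenvalue decay: if the eigenvalues of `K`, listed in
nonincreasing order, satisfy `λᵢ ≤ n i^{-2t}` for `i = 1, …, n`, then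
`Tr[K (K + nλI)⁻¹] ≤ (1 + 1/(2t − 1)) λ^{-1/(2t)} + 1`. -/
theorem dof_bound_polynomial_decay {n : ℕ} (hn : 0 < n) (t : ℝ) (ht : 1 ≤ t)
    (lam : ℝ) (hlam0 : 0 < lam) (hlam1 : lam ≤ 1)
    (K : Matrix (Fin n) (Fin n) ℝ) (hK : K.PosSemidef)
    (σ : Equiv.Perm (Fin n)) (hanti : Antitone (hK.1.eigenvalues ∘ σ))
    (hdecay : ∀ i : Fin n, hK.1.eigenvalues (σ i) ≤ (n : ℝ) * ((i.1 + 1 : ℝ)) ^ (-(2 * t))) :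
    Matrix.trace (K * (K + (↑n * lam) • (1 : Matrix (Fin n) (Fin n) ℝ))⁻¹)
      ≤ (1 + 1 / (2 * t - 1)) * lam ^ (-(1 / (2 * t))) + 1 :=
  dof_bound_polynomial_decay_general t ht lam hlam0 K hK σ hdecay
end

section
/- Let n be a positive integer and λ > 0 with nλ ≥ 1. Let K be an n×n real symmetric positive semidefinite matrix whose eigenvalues satisfy λᵢ ≤ n/i for all i = 1, …, n. Then Tr[K (K + nλI)⁻¹] ≤ (1/λ)(1 + log(nλ)). -/
open Matrix

lemma trace_reg_inv {n : ℕ} (K : Matrix (Fin n) (Fin n) ℝ) (hK : K.PosSemidef)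
    (c : ℝ) (hc : 0 < c) :
    Matrix.trace (K * (K + c • (1 : Matrix (Fin n) (Fin n) ℝ))⁻¹)
      = ∑ i, hK.1.eigenvalues i / (hK.1.eigenvalues i + c) := by
  set μ := hK.1.eigenvalues with hμ
  set U : Matrix (Fin n) (Fin n) ℝ := (hK.1.eigenvectorUnitary : Matrix (Fin n) (Fin n) ℝ) with hU
  have hUU : U * star U = 1 := (mem_unitaryGroup_iff).mp hK.1.eigenvectorUnitary.2
  have hUU' : star U * U = 1 := (mem_unitaryGroup_iff').mp hK.1.eigenvectorUnitary.2
  have key : ∀ A B : Matrix (Fin n) (Fin n) ℝ,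
      (U * A * star U) * (U * B * star U) = U * (A * B) * star U := by
    intro A B
    calc (U * A * star U) * (U * B * star U)
        = U * A * (star U * U) * B * star U := by simp only [Matrix.mul_assoc]
      _ = U * A * 1 * B * star U := by rw [hUU']
      _ = U * (A * B) * star U := by simp only [Matrix.mul_one, Matrix.mul_assoc]
  have hspec : K = U * diagonal μ * star U := by
    have := hK.1.spectral_theorem
    simpa using this
  have hne : ∀ i, μ i + c ≠ 0 := fun i =>
    ne_of_gt (add_pos_of_nonneg_of_pos (hK.eigenvalues_nonneg i) hc)
  have hreg : K + c • (1 : Matrix (Fin n) (Fin n) ℝ)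
      = U * diagonal (fun i => μ i + c) * star U := by
    have hd : (diagonal (fun i => μ i + c) : Matrix (Fin n) (Fin n) ℝ)
        = diagonal μ + c • 1 := by
      ext i j
      by_cases h : i = j <;> simp [h, Matrix.one_apply, diagonal_apply]
    rw [hd, mul_add, add_mul, ← hspec]
    congr 1
    rw [mul_smul_comm, mul_one, smul_mul_assoc, hUU]
  have hinv : (K + c • (1 : Matrix (Fin n) (Fin n) ℝ))⁻¹
      = U * diagonal (fun i => (μ i + c)⁻¹) * star U := by
    apply inv_eq_right_inv
    rw [hreg, key, diagonal_mul_diagonal]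
    have : (fun i => (μ i + c) * (μ i + c)⁻¹) = fun _ => (1:ℝ) := by
      funext i; exact mul_inv_cancel₀ (hne i)
    rw [this, diagonal_one, mul_one, hUU]
  rw [hinv]
  conv_lhs => rw [hspec]
  rw [key, diagonal_mul_diagonal, Matrix.trace_mul_cycle, hUU', one_mul, trace_diagonal]
  simp [div_eq_mul_inv]

/-- slowest eigenvalue decay: if the eigenvalues of `K` satisfy
`λᵢ ≤ n/i` for `i = 1, …, n` and `nλ ≥ 1`, then
`Tr[K (K + nλI)⁻¹] ≤ (1/λ)(1 + log(nλ))`. -/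
theorem dof_bound_slowest_decay {n : ℕ} (hn : 0 < n)
    (lam : ℝ) (hlam0 : 0 < lam) (hnlam : 1 ≤ (n : ℝ) * lam)
    (K : Matrix (Fin n) (Fin n) ℝ) (hK : K.PosSemidef)
    (σ : Equiv.Perm (Fin n)) (hanti : Antitone (hK.1.eigenvalues ∘ σ))
    (hdecay : ∀ i : Fin n, hK.1.eigenvalues (σ i) ≤ (n : ℝ) / (i.1 + 1 : ℝ)) :
    Matrix.trace (K * (K + (↑n * lam) • (1 : Matrix (Fin n) (Fin n) ℝ))⁻¹)
      ≤ (1 / lam) * (1 + Real.log ((n : ℝ) * lam)) := by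
  have hc : 0 < (n : ℝ) * lam := lt_of_lt_of_le one_pos hnlam
  rw [trace_reg_inv K hK _ hc]
  set μ := hK.1.eigenvalues with hμ
  have hμ0 : ∀ i, 0 ≤ μ i := hK.eigenvalues_nonneg
  rw [← Equiv.sum_comp σ (fun i => μ i / (μ i + (n:ℝ) * lam))]
  have hterm : ∀ i : Fin n,
      μ (σ i) / (μ (σ i) + (n:ℝ)*lam) ≤ 1 / (1 + (i.1 + 1 : ℝ) * lam) := by
    intro i
    have hi1 : (0:ℝ) < (i.1 + 1 : ℝ) := by positivity
    have ha : (0:ℝ) ≤ (n:ℝ) / (i.1 + 1 : ℝ) := by positivity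
    have h1 : μ (σ i) / (μ (σ i) + (n:ℝ)*lam)
        ≤ ((n:ℝ)/(i.1+1:ℝ)) / ((n:ℝ)/(i.1+1:ℝ) + (n:ℝ)*lam) := by
      rw [div_le_div_iff₀ (add_pos_of_nonneg_of_pos (hμ0 (σ i)) hc) (by positivity)]
      nlinarith [hdecay i, hμ0 (σ i)]
    have h2 : ((n:ℝ)/(i.1+1:ℝ)) / ((n:ℝ)/(i.1+1:ℝ) + (n:ℝ)*lam)
        = 1 / (1 + (i.1 + 1 : ℝ) * lam) := by
      have hn0 : (0:ℝ) < (n:ℝ) := by exact_mod_cast hn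
      field_simp
    rw [h2] at h1; exact h1
  calc ∑ i : Fin n, μ (σ i) / (μ (σ i) + (n:ℝ)*lam)
      ≤ ∑ i : Fin n, 1 / (1 + (i.1 + 1 : ℝ) * lam) :=
        Finset.sum_le_sum (fun i _ => hterm i)
    _ = ∑ i ∈ Finset.range n, 1 / (1 + ((i:ℝ) + 1) * lam) := by
        rw [Fin.sum_univ_eq_sum_range (fun i => 1 / (1 + ((i:ℝ) + 1) * lam)) n]
    _ ≤ ∑ i ∈ Finset.range n,
        (1/lam) * (Real.log (1 + ((i:ℝ)+1)*lam) - Real.log (1 + (i:ℝ)*lam)) := by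
        apply Finset.sum_le_sum
        intro i _
        have hb : (0:ℝ) < 1 + ((i:ℝ)+1)*lam := by positivity
        have ha : (0:ℝ) < 1 + (i:ℝ)*lam := by positivity
        have hlog : Real.log ((1 + (i:ℝ)*lam) / (1 + ((i:ℝ)+1)*lam))
            ≤ (1 + (i:ℝ)*lam) / (1 + ((i:ℝ)+1)*lam) - 1 :=
          Real.log_le_sub_one_of_pos (by positivity)
        rw [Real.log_div (ne_of_gt ha) (ne_of_gt hb)] at hlog
        have key : lam / (1 + ((i:ℝ)+1)*lam)
            ≤ Real.log (1 + ((i:ℝ)+1)*lam) - Real.log (1 + (i:ℝ)*lam) := by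
          have : (1 + (i:ℝ)*lam) / (1 + ((i:ℝ)+1)*lam) - 1
              = -(lam / (1 + ((i:ℝ)+1)*lam)) := by
            field_simp
            ring
          rw [this] at hlog
          linarith
        have := mul_le_mul_of_nonneg_left key (le_of_lt (one_div_pos.mpr hlam0))
        calc 1 / (1 + ((i:ℝ)+1)*lam) = (1/lam) * (lam / (1 + ((i:ℝ)+1)*lam)) := by
              field_simp
          _ ≤ _ := this
    _ = (1/lam) * Real.log (1 + (n:ℝ)*lam) := by
        have h := Finset.sum_range_sub (fun i : ℕ => Real.log (1 + (i:ℝ)*lam)) n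
        push_cast at h
        rw [← Finset.mul_sum]
        rw [h]
        simp
    _ ≤ (1 / lam) * (1 + Real.log ((n : ℝ) * lam)) := by
        apply mul_le_mul_of_nonneg_left _ (le_of_lt (one_div_pos.mpr hlam0))
        have h1 : (1:ℝ) + (n:ℝ)*lam ≤ 2 * ((n:ℝ)*lam) := by linarith
        have h2 : Real.log (1 + (n:ℝ)*lam) ≤ Real.log (2 * ((n:ℝ)*lam)) :=
          Real.log_le_log (by positivity) h1
        rw [Real.log_mul (by norm_num) (ne_of_gt hc)] at h2
        have h3 : Real.log 2 ≤ 1 := by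
          have := Real.log_le_sub_one_of_pos (by norm_num : (0:ℝ) < 2)
          linarith
        linarith
end

section
/- Let n be a positive integer, K a nonzero n×n real symmetric positive semidefinite matrix, λ > 0, y ∈ ℝⁿ, z ∈ ℝⁿ, and p ≥ 0. Set l = p zᵀ (K + nλI)⁻¹ z, L = (p/(n²λ)) zᵀ (y yᵀ + n I) z, D = (1/(n²λ)) Tr[(y yᵀ + n I) K], and q = L/D; assume q > 0. Define the whitened importance-weighted rank-one matrix A = (K + nλI)^{-1/2} ((p/q) z zᵀ) (K + nλI)^{-1/2}. Then A² = (l/q) A, and consequently A² ⪯ D · A in the Loewner order. -/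
/-!
Writing `w = S⁻¹ z`, the whitened matrix is the rank-one matrix `A = (p/q) w wᵀ`, so
`A² = (p/q) (w ⬝ w) A` and `p (w ⬝ w) = p zᵀ (S²)⁻¹ z = l`. Hence `D A - A² = (D - l/q) A`,
and since `D = L/q` this is `((L - l)/q) A`, positive semidefinite because the ridge leverage
is dominated by the surrogate one: `nλ ‖w‖² ≤ wᵀ (K + nλ I) w = ‖z‖²` and
`n ‖z‖² ≤ zᵀ (y yᵀ + n I) z`.
-/

open Matrix

variable {m : Type*} [Fintype m]

section CommSemiring

variable {R : Type*} [CommSemiring R]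

theorem smul_vecMulVec_self_mul_self (c : R) (w : m → R) :
    c • vecMulVec w w * c • vecMulVec w w = (c * (w ⬝ᵥ w)) • c • vecMulVec w w := by
  rw [Matrix.smul_mul, Matrix.mul_smul, vecMulVec_mul_vecMulVec, vecMulVec_smul, smul_smul,
    smul_smul, smul_smul]
  congr 1
  ring

theorem Matrix.IsSymm.mul_vecMulVec_mul_self {S : Matrix m m R} (hS : S.IsSymm) (z : m → R) :
    S * vecMulVec z z * S = vecMulVec (S *ᵥ z) (S *ᵥ z) := by
  rw [mul_vecMulVec, vecMulVec_mul, ← mulVec_transpose, hS.eq]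

theorem Matrix.IsSymm.dotProduct_mul_self_mulVec {S : Matrix m m R} (hS : S.IsSymm)
    (w : m → R) : w ⬝ᵥ ((S * S) *ᵥ w) = (S *ᵥ w) ⬝ᵥ (S *ᵥ w) := by
  rw [← mulVec_mulVec, dotProduct_mulVec, ← mulVec_transpose, hS.eq]

end CommSemiring

section Real

variable [DecidableEq m]

theorem Matrix.PosSemidef.mul_dotProduct_self_le {K : Matrix m m ℝ} (hK : K.PosSemidef)
    (μ : ℝ) (w : m → ℝ) : μ * (w ⬝ᵥ w) ≤ w ⬝ᵥ ((K + μ • 1) *ᵥ w) := by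
  have hKw : 0 ≤ w ⬝ᵥ (K *ᵥ w) := hK.dotProduct_mulVec_nonneg w
  rw [add_mulVec, dotProduct_add, smul_mulVec, one_mulVec, dotProduct_smul, smul_eq_mul]
  linarith

theorem mul_dotProduct_inv_mulVec_le {K S : Matrix m m ℝ} {μ : ℝ} (hK : K.PosSemidef)
    (hS : S.IsSymm) (hSdet : IsUnit S.det) (hSS : S * S = K + μ • 1) (z : m → ℝ) :
    μ * (z ⬝ᵥ ((K + μ • 1)⁻¹ *ᵥ z)) ≤ z ⬝ᵥ z := by
  set w := S⁻¹ *ᵥ z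
  have hSw : S *ᵥ w = z := by rw [mulVec_mulVec, mul_nonsing_inv S hSdet, one_mulVec]
  calc μ * (z ⬝ᵥ ((K + μ • 1)⁻¹ *ᵥ z)) = μ * (w ⬝ᵥ w) := by
        rw [← hSS, Matrix.mul_inv_rev, hS.inv.dotProduct_mul_self_mulVec]
    _ ≤ w ⬝ᵥ ((K + μ • 1) *ᵥ w) := hK.mul_dotProduct_self_le μ w
    _ = z ⬝ᵥ z := by rw [← hSS, hS.dotProduct_mul_self_mulVec, hSw]

theorem ridge_leverage_le_surrogate_leverage {K S : Matrix m m ℝ} {c lam p : ℝ}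
    (hK : K.PosSemidef) (hS : S.IsSymm) (hSdet : IsUnit S.det)
    (hSS : S * S = K + (c * lam) • 1) (hc : 0 < c) (hlam : 0 < lam) (hp : 0 ≤ p)
    (y z : m → ℝ) :
    p * (z ⬝ᵥ ((K + (c * lam) • 1)⁻¹ *ᵥ z)) ≤
      p / (c ^ 2 * lam) * (z ⬝ᵥ ((vecMulVec y y + c • 1) *ᵥ z)) := by
  set X := z ⬝ᵥ ((K + (c * lam) • 1)⁻¹ *ᵥ z)
  set Y := z ⬝ᵥ ((vecMulVec y y + c • 1) *ᵥ z)
  have hXY : c ^ 2 * lam * X ≤ Y := calc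
    c ^ 2 * lam * X = c * (c * lam * X) := by ring
    _ ≤ c * (z ⬝ᵥ z) := by gcongr; exact mul_dotProduct_inv_mulVec_le hK hS hSdet hSS z
    _ ≤ Y := (posSemidef_vecMulVec_self_star y).mul_dotProduct_self_le c z
  rw [div_mul_eq_mul_div, le_div_iff₀ (by positivity), mul_assoc, mul_comm X]
  exact mul_le_mul_of_nonneg_left hXY hp

end Real

theorem whitened_rank_one_second_moment_general {n : ℕ} (hn : 0 < n)
    (K : Matrix (Fin n) (Fin n) ℝ) (hK : K.PosSemidef)
    (lam : ℝ) (hlam : 0 < lam) (y z : Fin n → ℝ) (p : ℝ) (hp : 0 ≤ p)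
    (l L D q : ℝ)
    (hl : l = p * (z ⬝ᵥ ((K + (↑n * lam) • (1 : Matrix (Fin n) (Fin n) ℝ))⁻¹ *ᵥ z)))
    (hL : L = (p / ((n : ℝ) ^ 2 * lam)) *
        (z ⬝ᵥ ((vecMulVec y y + (n : ℝ) • (1 : Matrix (Fin n) (Fin n) ℝ)) *ᵥ z)))
    (hq : q = L / D) (hqpos : 0 < q)
    (S : Matrix (Fin n) (Fin n) ℝ) (hS : S.PosDef)
    (hSS : S * S = K + (↑n * lam) • (1 : Matrix (Fin n) (Fin n) ℝ))
    (A : Matrix (Fin n) (Fin n) ℝ)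
    (hA : A = S⁻¹ * ((p / q) • vecMulVec z z) * S⁻¹) :
    A * A = (l / q) • A ∧ (D • A - A * A).PosSemidef := by
  have hSsymm : S.IsSymm := isHermitian_iff_isSymm.mp hS.isHermitian
  set w := S⁻¹ *ᵥ z
  have hAw : A = (p / q) • vecMulVec w w := by
    rw [hA, Matrix.mul_smul, Matrix.smul_mul, hSsymm.inv.mul_vecMulVec_mul_self]
  have hlw : l = p * (w ⬝ᵥ w) := by
    rw [hl, ← hSS, Matrix.mul_inv_rev, hSsymm.inv.dotProduct_mul_self_mulVec]
  have hsq : A * A = (l / q) • A := by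
    rw [hAw, smul_vecMulVec_self_mul_self, hlw, mul_div_right_comm]
  have hlL : l ≤ L := hl ▸ hL ▸ ridge_leverage_le_surrogate_leverage hK hSsymm
    ((isUnit_iff_isUnit_det S).mp hS.isUnit) hSS (by positivity) hlam hp y z
  have hDq : D = L / q := by
    have hD0 : D ≠ 0 := by rintro rfl; simp [hq] at hqpos
    rw [eq_div_iff hqpos.ne', hq, mul_div_cancel₀ L hD0]
  refine ⟨hsq, ?_⟩
  rw [hsq, ← sub_smul, hDq, ← sub_div, hAw]
  exact ((posSemidef_vecMulVec_self_star w).smul (div_nonneg hp hqpos.le)).smul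
    (div_nonneg (sub_nonneg.mpr hlL) hqpos.le)

/-- for the whitened importance-weighted rank-one matrix
`A = (K+nλI)^{-1/2} ((p/q) z zᵀ) (K+nλI)^{-1/2}` one has `A² = (l/q) A`, and hence
`A² ⪯ D · A` in the Loewner order. -/
theorem whitened_rank_one_second_moment {n : ℕ} (hn : 0 < n)
    (K : Matrix (Fin n) (Fin n) ℝ) (hK : K.PosSemidef) (hKne : K ≠ 0)
    (lam : ℝ) (hlam : 0 < lam) (y z : Fin n → ℝ) (p : ℝ) (hp : 0 ≤ p)
    (l L D q : ℝ)
    (hl : l = p * (z ⬝ᵥ ((K + (↑n * lam) • (1 : Matrix (Fin n) (Fin n) ℝ))⁻¹ *ᵥ z)))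
    (hL : L = (p / ((n : ℝ) ^ 2 * lam)) *
        (z ⬝ᵥ ((vecMulVec y y + (n : ℝ) • (1 : Matrix (Fin n) (Fin n) ℝ)) *ᵥ z)))
    (hD : D = (1 / ((n : ℝ) ^ 2 * lam)) *
        Matrix.trace ((vecMulVec y y + (n : ℝ) • (1 : Matrix (Fin n) (Fin n) ℝ)) * K))
    (hq : q = L / D) (hqpos : 0 < q)
    (S : Matrix (Fin n) (Fin n) ℝ) (hS : S.PosDef)
    (hSS : S * S = K + (↑n * lam) • (1 : Matrix (Fin n) (Fin n) ℝ))
    (A : Matrix (Fin n) (Fin n) ℝ)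
    (hA : A = S⁻¹ * ((p / q) • vecMulVec z z) * S⁻¹) :
    A * A = (l / q) • A ∧ (D • A - A * A).PosSemidef :=
  whitened_rank_one_second_moment_general hn K hK lam hlam y z p hp l L D q hl hL hq hqpos S hS hSS
    A hA
end
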